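/- arXiv:1804.05919 — 3 statements merged into one kernel-verified Lean document; each statement's English description precedes it below -/
import Mathlib

section
/- Let P be a finite atomic lattice and let M be a labeling assigning to each p ∈ P a monomial m_p ∈ K[x_1,…,x_n] (the label m_p = 1 is allowed) satisfying: (C1) m_p ≠ 1 for every meet-irreducible p ∈ P; and (C2) whenever gcd(m_p, m_q) ≠ 1 for p, q ∈ P, the elements p and q are comparable in P. For each atom a of P set x(a) = ∏_{p ∈ P, p ≱ a} m_p. Then the map sending p ∈ P to lcm{x(a) : a an atom of P with a ≤ p} (sending the minimal element to 1) is a lattice isomorphism from P onto the LCM-lattice of the set of monomials {x(a) : a an atom of P}. -/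
/-!
Write `x(a)ᵢ = ∑_{r ≱ a} (M r)ᵢ`. By (C2) the elements whose label involves the variable `i`
form a chain, and for every `a` those of them not above `a` form an initial segment of it; these
segments are nested, so `x(a ⊔ b) = lcm (x(a), x(b))`. With atomicity, the map
`p ↦ lcm {x(a) : a ≤ p atom}` is therefore just `p ↦ x(p)`. If `p ≰ q`, some meet-irreducible
`m ≥ q` has `p ≰ m`; a variable `i` of `M m` is counted in `x(p)ᵢ` but not in `x(q)ᵢ`, and
nestedness gives `x(q)ᵢ < x(p)ᵢ`, so `x` reflects the order.
-/

/-- The monomial `x(a) = ∏_{p ∈ P, p ≱ a} m_p` attached to an element `a` of a labeled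
finite lattice `P`; monomials are encoded as exponent vectors in `Fin n → ℕ`, so the
product of monomials is the (pointwise) sum of exponent vectors. -/
noncomputable def coordMonomial {P : Type*} [Fintype P] [PartialOrder P]
    [DecidableRel (α := P) (· ≤ ·)] {n : ℕ} (M : P → (Fin n → ℕ)) (a : P) :
    Fin n → ℕ :=
  fun i => ∑ p : P, if a ≤ p then 0 else M p i

/-- The map `P → monomials` sending `p` to `lcm {x(a) : a an atom of P with a ≤ p}`
(and sending `⊥` to `1 = 0` as exponent vector); `lcm` of monomials is the pointwise
`⊔` of exponent vectors. -/
noncomputable def coordMap {P : Type*} [Fintype P] [Lattice P] [OrderBot P]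
    [DecidableRel (α := P) (· ≤ ·)] [DecidablePred (IsAtom : P → Prop)]
    {n : ℕ} (M : P → (Fin n → ℕ)) (p : P) : Fin n → ℕ :=
  Finset.univ.sup (fun a : P => if IsAtom a ∧ a ≤ p then coordMonomial M a else 0)

section

variable {P : Type*} {n : ℕ} {M : P → Fin n → ℕ}

lemma forall_le_imp_le_or_of_isChain [PartialOrder P] {i : Fin n}
    (hC : IsChain (· ≤ ·) {r | M r i ≠ 0}) (a b : P) :
    (∀ r, M r i ≠ 0 → b ≤ r → a ≤ r) ∨ (∀ r, M r i ≠ 0 → a ≤ r → b ≤ r) := by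
  by_contra! ⟨⟨r, hr, hbr, har⟩, ⟨s, hs, has, hbs⟩⟩
  rcases hC.total hr hs with hrs | hsr
  · exact hbs (hbr.trans hrs)
  · exact har (has.trans hsr)

section PartialOrder

variable [PartialOrder P] [Fintype P] [DecidableRel (α := P) (· ≤ ·)]

lemma coordMonomial_apply_le_of_forall {a b : P} {i : Fin n}
    (h : ∀ r, M r i ≠ 0 → b ≤ r → a ≤ r) : coordMonomial M a i ≤ coordMonomial M b i := by
  refine Finset.sum_le_sum fun r _ => ?_
  by_cases hr : M r i = 0
  · simp [hr]
  · split_ifs with har hbr <;> simp_all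

lemma coordMonomial_mono : Monotone (coordMonomial M) :=
  fun _ _ hab _ => coordMonomial_apply_le_of_forall fun _ _ hbr => hab.trans hbr

lemma coordMonomial_apply_lt_of_forall {a b m : P} {i : Fin n}
    (h : ∀ r, M r i ≠ 0 → b ≤ r → a ≤ r) (hm : M m i ≠ 0) (ham : a ≤ m) (hbm : ¬ b ≤ m) :
    coordMonomial M a i < coordMonomial M b i := by
  refine Finset.sum_lt_sum (fun r _ => ?_) ⟨m, Finset.mem_univ m, ?_⟩
  · by_cases hr : M r i = 0
    · simp [hr]
    · split_ifs with har hbr <;> simp_all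
  · simpa [ham, hbm] using Nat.pos_of_ne_zero hm

end PartialOrder

section Lattice

variable [Lattice P] [Fintype P] [DecidableRel (α := P) (· ≤ ·)]

lemma coordMonomial_bot [OrderBot P] : coordMonomial M ⊥ = 0 := by
  funext i
  simp [coordMonomial]

lemma coordMonomial_sup (hC : ∀ i, IsChain (· ≤ ·) {r | M r i ≠ 0}) (a b : P) :
    coordMonomial M (a ⊔ b) = coordMonomial M a ⊔ coordMonomial M b := by
  refine le_antisymm (fun i => ?_) (sup_le (coordMonomial_mono le_sup_left)
    (coordMonomial_mono le_sup_right))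
  rcases forall_le_imp_le_or_of_isChain (hC i) a b with hab | hba
  · exact (coordMonomial_apply_le_of_forall fun r hr hbr => sup_le (hab r hr hbr) hbr).trans
      le_sup_right
  · exact (coordMonomial_apply_le_of_forall fun r hr har => sup_le har (hba r hr har)).trans
      le_sup_left

lemma coordMonomial_finset_sup [OrderBot P] (hC : ∀ i, IsChain (· ≤ ·) {r | M r i ≠ 0})
    {ι : Type*} (s : Finset ι) (f : ι → P) :
    coordMonomial M (s.sup f) = s.sup (coordMonomial M ∘ f) :=
  Finset.apply_sup_eq_sup_comp _ (coordMonomial_sup hC) coordMonomial_bot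

lemma coordMonomial_le_coordMonomial_iff [OrderTop P] (hC1 : ∀ m : P, InfIrred m → M m ≠ 0)
    (hC : ∀ i, IsChain (· ≤ ·) {r | M r i ≠ 0}) {p q : P} :
    coordMonomial M p ≤ coordMonomial M q ↔ p ≤ q := by
  refine ⟨fun hpq => ?_, fun h => coordMonomial_mono h⟩
  by_contra hpq'
  obtain ⟨s, rfl, hs⟩ := exists_infIrred_decomposition q
  obtain ⟨m, hms, hpm⟩ : ∃ m ∈ s, ¬ p ≤ m := by
    by_contra! h
    exact hpq' (Finset.le_inf h)
  obtain ⟨i, hi⟩ := Function.ne_iff.mp (hC1 m (hs hms))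
  have hqm : s.inf id ≤ m := Finset.inf_le hms
  have hnested : ∀ r, M r i ≠ 0 → p ≤ r → s.inf id ≤ r :=
    (forall_le_imp_le_or_of_isChain (hC i) _ _).resolve_right fun h => hpm (h m hi hqm)
  exact (hpq i).not_gt (coordMonomial_apply_lt_of_forall hnested hi hqm hpm)

variable [OrderBot P] [DecidablePred (IsAtom : P → Prop)]

lemma coordMap_eq_finset_sup (p : P) :
    coordMap M p = ({a | IsAtom a ∧ a ≤ p} : Finset P).sup (coordMonomial M) := by
  simp [coordMap, Finset.sup_ite]

lemma finset_sup_atoms_le_eq (hatomic : ∀ p : P, p ≠ ⊥ → IsLUB {a : P | IsAtom a ∧ a ≤ p} p)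
    (p : P) : ({a | IsAtom a ∧ a ≤ p} : Finset P).sup id = p := by
  refine le_antisymm (Finset.sup_le fun a ha => (Finset.mem_filter.1 ha).2.2) ?_
  rcases eq_or_ne p ⊥ with rfl | hp
  · exact bot_le
  · exact (hatomic p hp).2 fun a ha => Finset.le_sup (f := id) (by simpa using ha)

lemma coordMap_eq_coordMonomial
    (hatomic : ∀ p : P, p ≠ ⊥ → IsLUB {a : P | IsAtom a ∧ a ≤ p} p)
    (hC : ∀ i, IsChain (· ≤ ·) {r | M r i ≠ 0}) : coordMap M = coordMonomial M := by
  funext p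
  rw [coordMap_eq_finset_sup, ← Function.comp_id (coordMonomial M),
    ← coordMonomial_finset_sup hC, finset_sup_atoms_le_eq hatomic, Function.comp_id]

end Lattice

end

theorem stmt4_general (P : Type*) [Fintype P] [Lattice P] [BoundedOrder P]
    [DecidableRel (α := P) (· ≤ ·)] [DecidablePred (IsAtom : P → Prop)]
    (hatomic : ∀ p : P, p ≠ ⊥ → IsLUB {a : P | IsAtom a ∧ a ≤ p} p)
    (n : ℕ) (M : P → (Fin n → ℕ))
    (hC1 : ∀ p : P, (p ≠ ⊤ ∧ ∀ a b : P, p < a → p < b → a ⊓ b ≠ p) → M p ≠ 0)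
    (hC2 : ∀ p q : P, (∃ i : Fin n, M p i ≠ 0 ∧ M q i ≠ 0) → (p ≤ q ∨ q ≤ p)) :
    Set.range (coordMap M) =
      {v : Fin n → ℕ | ∃ S : Finset P, (∀ a ∈ S, IsAtom a) ∧ v = S.sup (coordMonomial M)} ∧
    ∀ p q : P, (coordMap M p ≤ coordMap M q ↔ p ≤ q) := by
  have hC : ∀ i, IsChain (· ≤ ·) {r | M r i ≠ 0} := fun i r hr s hs _ => hC2 r s ⟨i, hr, hs⟩
  have hInfIrred : ∀ m : P, InfIrred m → M m ≠ 0 := fun m hm =>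
    hC1 m ⟨hm.ne_top, fun a b ha hb hab => (hm.2 hab).elim ha.ne' hb.ne'⟩
  refine ⟨Set.ext fun v => ⟨?_, ?_⟩, fun p q => ?_⟩
  · rintro ⟨p, rfl⟩
    exact ⟨_, fun a ha => (Finset.mem_filter.1 ha).2.1, coordMap_eq_finset_sup p⟩
  · rintro ⟨S, -, rfl⟩
    rw [coordMap_eq_coordMonomial hatomic hC]
    exact ⟨S.sup id, coordMonomial_finset_sup hC S id⟩
  · rw [coordMap_eq_coordMonomial hatomic hC]
    exact coordMonomial_le_coordMonomial_iff hInfIrred hC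

/-- Let `P` be a finite atomic lattice and `M` a labeling of `P` by
monomials of `K[x₁,…,xₙ]` (encoded by exponent vectors, with label `1` encoded by the
vector `0`) satisfying
(C1) `M p ≠ 1` for every meet-irreducible `p`, and
(C2) whenever `gcd (M p, M q) ≠ 1` (i.e. some variable appears in both labels),
`p` and `q` are comparable.
For each atom `a` set `x(a) = ∏_{p ≱ a} M p`.  Then the map `p ↦ lcm {x(a) : a atom, a ≤ p}`
(`⊥ ↦ 1`) is a lattice isomorphism from `P` onto the LCM-lattice
`{lcm(S) : S ⊆ {x(a) : a atom of P}}` of the monomials `x(a)`: its range is exactly that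
LCM-lattice and it is order-reflecting and order-preserving (hence an order isomorphism,
and so a lattice isomorphism, onto it). -/
theorem stmt4 (P : Type*) [Fintype P] [Lattice P] [BoundedOrder P]
    [DecidableRel (α := P) (· ≤ ·)] [DecidablePred (IsAtom : P → Prop)]
    (hatomic : ∀ p : P, p ≠ ⊥ → IsLUB {a : P | IsAtom a ∧ a ≤ p} p)
    (K : Type) [Field K] (n : ℕ) (M : P → (Fin n → ℕ))
    (hC1 : ∀ p : P, (p ≠ ⊤ ∧ ∀ a b : P, p < a → p < b → a ⊓ b ≠ p) → M p ≠ 0)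
    (hC2 : ∀ p q : P, (∃ i : Fin n, M p i ≠ 0 ∧ M q i ≠ 0) → (p ≤ q ∨ q ≤ p)) :
    Set.range (coordMap M) =
      {v : Fin n → ℕ | ∃ S : Finset P, (∀ a ∈ S, IsAtom a) ∧ v = S.sup (coordMonomial M)} ∧
    ∀ p q : P, (coordMap M p ≤ coordMap M q ↔ p ≤ q) :=
  stmt4_general P hatomic n M hC1 hC2
end

section
/- For every finite atomic lattice P there exist n ≥ 1 and a monomial ideal I in K[x_1,…,x_n] (K any field) whose LCM-lattice L_I is isomorphic to P as a lattice. -/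
/-- For every finite atomic lattice `P` (a finite lattice with bottom in
which every element other than `⊥` is the join of the atoms below it) and every field `K`,
there are `n ≥ 1` and a monomial ideal `I` of `K[x₁,…,xₙ]`, with minimal monomial
generating set `m₁,…,m_μ` (encoded by exponent vectors: nonconstant monomials forming an
antichain under divisibility, i.e. the pointwise order), whose LCM-lattice
`{lcm(S) : S ⊆ {m₁,…,m_μ}}`, ordered by divisibility, is isomorphic to `P` as a lattice. -/
theorem stmt5 (K : Type) [Field K] (P : Type*) [Lattice P] [Fintype P] [OrderBot P]
    (hatomic : ∀ p : P, p ≠ ⊥ → IsLUB {a : P | IsAtom a ∧ a ≤ p} p) :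
    ∃ (n μ : ℕ), 1 ≤ n ∧ ∃ m : Fin μ → (Fin n → ℕ),
      (∀ j, m j ≠ 0) ∧
      (∀ j k, j ≠ k → ¬ m j ≤ m k) ∧
      (∃ I : Ideal (MvPolynomial (Fin n) K), I = Ideal.span (Set.range fun j =>
          MvPolynomial.monomial (Finsupp.equivFunOnFinite.symm (m j)) (1 : K))) ∧
      Nonempty (P ≃o {v : Fin n → ℕ // ∃ S : Finset (Fin μ), v = S.sup m}) := by
  classical
  -- setup
  let e : P ≃ Fin (Fintype.card P) := Fintype.equivFin P
  let A := {a : P // IsAtom a}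
  let ea : A ≃ Fin (Fintype.card A) := Fintype.equivFin A
  set n := Fintype.card P with hn
  set μ := Fintype.card A with hμ
  let a : Fin μ → P := fun j => (ea.symm j : P)
  have ha : ∀ j, IsAtom (a j) := fun j => (ea.symm j).2
  let v : P → (Fin n → ℕ) := fun p q => if p ≤ e.symm q then 0 else 1
  let m : Fin μ → (Fin n → ℕ) := fun j => v (a j)
  -- v reflects order
  have lev : ∀ p p' : P, v p ≤ v p' ↔ p ≤ p' := by
    intro p p'
    constructor
    · intro h
      have h1 := h (e p')
      have h2 : v p' (e p') = 0 := by simp [v]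
      rw [h2] at h1
      have h3 : v p (e p') = 0 := Nat.le_zero.mp h1
      by_contra hpp
      have : v p (e p') = 1 := by simp [v, hpp]
      omega
    · intro h q
      dsimp only [v]
      by_cases h' : p' ≤ e.symm q
      · simp [h.trans h', h']
      · split <;> omega
  have vinj : Function.Injective v := fun p p' h =>
    le_antisymm ((lev p p').mp h.le) ((lev p' p).mp h.ge)
  -- sup formula
  have hsup : ∀ S : Finset (Fin μ), S.sup m = v (S.sup a) := by
    intro S
    funext q
    rw [Finset.sup_apply]
    dsimp only [v, m]
    by_cases h : S.sup a ≤ e.symm q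
    · have : ∀ j ∈ S, (if a j ≤ e.symm q then 0 else 1) = 0 := by
        intro j hj
        simp [le_trans (Finset.le_sup hj) h]
      simp only [h, if_true]
      exact Nat.le_antisymm (Finset.sup_le fun j hj => (this j hj).le) (Nat.zero_le _)
    · obtain ⟨j, hjS, hj⟩ : ∃ j ∈ S, ¬ a j ≤ e.symm q := by
        by_contra hc
        push_neg at hc
        exact h (Finset.sup_le hc)
      simp only [h, if_false]
      refine Nat.le_antisymm (Finset.sup_le fun k _ => ?_) ?_
      · split <;> omega
      · have := Finset.le_sup (f := fun j => if a j ≤ e.symm q then 0 else 1) hjS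
        simpa [hj] using this
  -- every p is a sup of atoms below it
  have hatoms : ∀ p : P, p = (Finset.univ.filter (fun j => a j ≤ p)).sup a := by
    intro p
    refine le_antisymm ?_ (Finset.sup_le fun j hj => (Finset.mem_filter.mp hj).2)
    by_cases hp : p = ⊥
    · simp [hp]
    · refine (hatomic p hp).2 ?_
      intro x hx
      obtain ⟨hx1, hx2⟩ := hx
      have : x = a (ea ⟨x, hx1⟩) := by simp [a]
      rw [this]
      refine Finset.le_sup (Finset.mem_filter.mpr ⟨Finset.mem_univ _, ?_⟩)
      rw [← this]; exact hx2
  refine ⟨n, μ, Fintype.card_pos, m, ?_, ?_, ⟨_, rfl⟩, ?_⟩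
  · -- nonzero
    intro j h
    have := congrFun h (e ⊥)
    have hb : ¬ a j ≤ e.symm (e ⊥) := by
      simp only [Equiv.symm_apply_apply]
      rw [le_bot_iff]
      exact (ha j).1
    simp [m, v, hb] at this
    exact (ha j).1 this
  · -- antichain
    intro j k hjk h
    have hle : a j ≤ a k := (lev _ _).mp h
    have := ((ha k).le_iff.mp hle).resolve_left (ha j).1
    apply hjk
    have : ea.symm j = ea.symm k := Subtype.ext this
    exact ea.symm.injective this
  · -- order iso
    refine ⟨?_⟩
    let f : P → {w : Fin n → ℕ // ∃ S : Finset (Fin μ), w = S.sup m} := fun p =>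
      ⟨v p, ⟨Finset.univ.filter (fun j => a j ≤ p), by rw [hsup, ← hatoms]⟩⟩
    have hbij : Function.Bijective f := by
      constructor
      · intro p p' h
        exact vinj (congrArg Subtype.val h)
      · rintro ⟨w, S, rfl⟩
        exact ⟨S.sup a, Subtype.ext (hsup S).symm⟩
    exact { toEquiv := Equiv.ofBijective f hbij,
            map_rel_iff' := fun {p p'} => by
              simpa [f, Equiv.ofBijective, Subtype.mk_le_mk] using lev p p' }
end

section
/- Let I be a square-free monomial ideal in K[x_1,…,x_n] with minimal monomial generating set {m_1,…,m_μ} and hypergraph H(I) on vertex set V = {1,…,μ}. Then the map sending a set S ∈ L_{H(I)} to lcm{m_j : j ∈ S} (with ∅ ↦ 1) is a lattice isomorphism from L_{H(I)} onto the LCM-lattice L_I of I. -/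
/-- The (dual) hypergraph attached to a family of square-free monomials of `K[x₁,…,xₙ]`
(encoded by their supports `m j ⊆ {x₁,…,xₙ}`): its edges are the nonempty sets
`{j : xᵢ divides m_j}`, `i = 1,…,n`. -/
def hgEdges {n μ : ℕ} (m : Fin μ → Finset (Fin n)) : Set (Finset (Fin μ)) :=
  {F | F.Nonempty ∧ ∃ i : Fin n, F = Finset.univ.filter (fun j => i ∈ m j)}

/-- The lattice `L_H` of a hypergraph `H` on vertex set `V = {1,…,μ}`: all intersections
of complements in `V` of one or more edges of `H`, together with `V` itself, ordered by
inclusion (a finite lattice whose meet is intersection). -/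
def latticeOfHG {n μ : ℕ} (m : Fin μ → Finset (Fin n)) : Set (Finset (Fin μ)) :=
  {A | A = Finset.univ ∨ ∃ 𝒯 : Finset (Finset (Fin μ)), 𝒯.Nonempty ∧
    (∀ F ∈ 𝒯, F ∈ hgEdges m) ∧ A = 𝒯.inf (fun F => Fᶜ)}

lemma closedOfLattice {n μ : ℕ} (m : Fin μ → Finset (Fin n)) :
    ∀ T ∈ latticeOfHG m, ∀ j : Fin μ, m j ⊆ T.sup m → j ∈ T := by
  intro T hT j hj
  rcases hT with rfl | ⟨𝒯, -, hE, rfl⟩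
  · exact Finset.mem_univ j
  · rw [Finset.mem_inf]
    intro F hF
    obtain ⟨-, i, rfl⟩ := hE F hF
    rw [Finset.mem_compl, Finset.mem_filter]
    rintro ⟨-, hij⟩
    have := hj hij
    rw [Finset.mem_sup] at this
    obtain ⟨k, hk, hik⟩ := this
    have := Finset.mem_inf.mp hk _ hF
    rw [Finset.mem_compl, Finset.mem_filter] at this
    exact this ⟨Finset.mem_univ k, hik⟩

/-- Let `I` be a square-free monomial ideal in `K[x₁,…,xₙ]` with minimal
monomial generating set `{m₁,…,m_μ}` (encoded by the nonempty supports `m j`, forming an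
antichain; divisibility of square-free monomials is inclusion of supports and `lcm` is
union of supports, with `lcm ∅ = 1` encoded by `∅`) and hypergraph `H(I)` on vertex set
`V = {1,…,μ}`.  Then the map sending `S ∈ L_{H(I)}` to `lcm {m_j : j ∈ S}` is a lattice
isomorphism from `L_{H(I)}` onto the LCM-lattice `L_I = {lcm(S) : S ⊆ {m₁,…,m_μ}}`: it is
order-preserving and order-reflecting on `L_{H(I)}` and its image is exactly `L_I`. -/
theorem stmt9 (K : Type) [Field K] (n μ : ℕ) (hμ : 1 ≤ μ)
    (m : Fin μ → Finset (Fin n))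
    (hne : ∀ j, (m j).Nonempty)
    (hmin : ∀ j k, j ≠ k → ¬ m j ⊆ m k) :
    (∀ S ∈ latticeOfHG m, ∀ T ∈ latticeOfHG m, (S.sup m ⊆ T.sup m ↔ S ⊆ T)) ∧
    (fun S : Finset (Fin μ) => S.sup m) '' latticeOfHG m =
      {A : Finset (Fin n) | ∃ S : Finset (Fin μ), A = S.sup m} := by
  have key := closedOfLattice m
  constructor
  · intro S hS T hT
    constructor
    · intro h j hjS
      exact key T hT j (le_trans (Finset.le_sup hjS) h)
    · exact fun h => Finset.sup_mono h
  · ext A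
    simp only [Set.mem_image, Set.mem_setOf_eq]
    constructor
    · rintro ⟨S, -, rfl⟩; exact ⟨S, rfl⟩
    · rintro ⟨S, rfl⟩
      set T : Finset (Fin μ) := Finset.univ.filter (fun j => m j ⊆ S.sup m) with hTdef
      have hsup : T.sup m = S.sup m := by
        apply le_antisymm
        · exact Finset.sup_le fun j hj => (Finset.mem_filter.mp hj).2
        · exact Finset.sup_mono (fun j hj => Finset.mem_filter.mpr
            ⟨Finset.mem_univ j, Finset.le_sup hj⟩)
      refine ⟨T, ?_, hsup⟩
      by_cases hU : T = Finset.univ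
      · exact Or.inl hU
      · right
        set s : Finset (Fin n) := Finset.univ.filter
          (fun i => i ∉ S.sup m ∧ (Finset.univ.filter (fun j => i ∈ m j)).Nonempty) with hsdef
        refine ⟨s.image (fun i => Finset.univ.filter (fun j => i ∈ m j)), ?_, ?_, ?_⟩
        · -- nonempty
          rw [Finset.image_nonempty]
          by_contra hemp
          apply hU
          ext j
          simp only [hTdef, Finset.mem_filter, Finset.mem_univ, true_and, iff_true]
          intro i hi
          by_contra hiA
          exact hemp ⟨i, Finset.mem_filter.mpr ⟨Finset.mem_univ i, hiA,
            ⟨j, Finset.mem_filter.mpr ⟨Finset.mem_univ j, hi⟩⟩⟩⟩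
        · rintro F hF
          rw [Finset.mem_image] at hF
          obtain ⟨i, hi, rfl⟩ := hF
          exact ⟨(Finset.mem_filter.mp hi).2.2, i, rfl⟩
        · ext j
          rw [Finset.inf_image]
          simp only [hTdef, Finset.mem_filter, Finset.mem_univ, true_and, Finset.mem_inf,
            Function.comp]
          constructor
          · intro hj F hF
            rw [hsdef, Finset.mem_filter] at hF
            rw [Finset.mem_compl, Finset.mem_filter]
            rintro ⟨-, hij⟩
            exact hF.2.1 (hj hij)
          · intro hj i hi
            by_contra hiA
            have hmem : i ∈ s := Finset.mem_filter.mpr ⟨Finset.mem_univ i, hiA,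
              ⟨j, Finset.mem_filter.mpr ⟨Finset.mem_univ j, hi⟩⟩⟩
            have := hj i hmem
            rw [Finset.mem_compl, Finset.mem_filter] at this
            exact this ⟨Finset.mem_univ j, hi⟩
end
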